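/- Let 𝓕 be a construction scheme (of some type), let n ≥ 1, and let k < ω. Suppose D_0, …, D_{n−1} ∈ 𝓕_k form an increasing Δ-system (i.e. there is a set D with D_i ∩ D_j = D for all i < j and D < D_0 ∖ D < … < D_{n−1} ∖ D), suppose P_j ∈ ℙ_n with P_j ⊆ D_j for each j < n, and suppose φ_{D_i,D_j}(P_i) = P_j for all i < j < n, where φ_{D_i,D_j} : D_i → D_j is the unique order-preserving bijection. Then ⋃_{j<n} P_j ∈ ℙ_n. -/

import Mathlib

noncomputable section
open scoped Classical

/-- The first uncountable ordinal, `ω₁`. -/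
def omega1 : Ordinal.{0} := (Cardinal.aleph 1).ord

/-- `ω₁` viewed as a linearly ordered type: the set of countable ordinals. -/
abbrev Omega1 := {o : Ordinal.{0} // o < omega1}

section Basic

variable {Ω : Type*} [LinearOrder Ω]

/-- `A ⊑ B` : `A` is an initial segment of `B` with respect to the order. -/
def IsInitialSegment (A B : Finset Ω) : Prop :=
  A ⊆ B ∧ ∀ x ∈ B, ∀ y ∈ A, x ≤ y → x ∈ A

/-- The unique order preserving bijection from `E` onto `F` (meaningful when
`|E| = |F|`), extended by the identity off `E`. -/
def opMap (E F : Finset Ω) (x : Ω) : Ω :=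
  if h : x ∈ E ∧ F.card = E.card then
    ((F.orderIsoOfFin h.2) ((E.orderIsoOfFin rfl).symm ⟨x, h.1⟩) : Ω)
  else x

/-- `A` is an interval of `B`: a set of consecutive elements of `B`. -/
def IsIntervalOf (A B : Finset Ω) : Prop :=
  A ⊆ B ∧ ∀ x ∈ A, ∀ z ∈ A, ∀ y ∈ B, x < y → y < z → y ∈ A

end Basic

/-- A type `(m_k, n_k, r_k)_{k<ω}`: `m 0 = 1`, `r k < m (k-1)` and `k < n k` for `k ≥ 1`,
every value is attained by `r` infinitely often, and `m k = n k * (m (k-1) - r k) + r k`. -/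
structure SchemeType where
  m : ℕ → ℕ
  n : ℕ → ℕ
  r : ℕ → ℕ
  m_zero : m 0 = 1
  r_lt_m : ∀ k, 1 ≤ k → r k < m (k - 1)
  k_lt_n : ∀ k, 1 ≤ k → k < n k
  r_infinitely_often : ∀ r' : ℕ, {k : ℕ | 1 ≤ k ∧ r k = r'}.Infinite
  m_rec : ∀ k, 1 ≤ k → m k = n k * (m (k - 1) - r k) + r k

/-- A construction scheme of type `τ` on a linear order `Ω` (in the paper, `Ω = ω₁` or `Ω = ω`):
a family of finite subsets of `Ω` partitioned into levels, with a root `R(F) ⊑ F` of size `r k`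
for every `F` in level `k`, which is cofinal in `[Ω]^{<ω}`, whose members at a common level
pairwise intersect in initial segments of both, and such that every `F` at level `k ≥ 1` has a
unique canonical decomposition `F = ⋃_{i < n k} Fᵢ` into level `k-1` members forming an
increasing Δ-system with root `R(F)`.  The canonical decomposition of `F` is `decomp F`. -/
structure ConstructionScheme (τ : SchemeType) (Ω : Type*) [LinearOrder Ω] where
  level : ℕ → Set (Finset Ω)
  root : Finset Ω → Finset Ω
  decomp : Finset Ω → ℕ → Finset Ω
  cover : ∀ A : Finset Ω, ∃ k, ∃ F ∈ level k, A ⊆ F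
  level_eq : ∀ k l F, F ∈ level k → F ∈ level l → k = l
  card_eq : ∀ k, ∀ F ∈ level k, F.card = τ.m k
  root_card : ∀ k, ∀ F ∈ level k, (root F).card = τ.r k
  root_initSeg : ∀ k, ∀ F ∈ level k, IsInitialSegment (root F) F
  inter_initSeg : ∀ k, ∀ E ∈ level k, ∀ F ∈ level k, IsInitialSegment (E ∩ F) E
  decomp_mem : ∀ k, 1 ≤ k → ∀ F ∈ level k, ∀ i < τ.n k, decomp F i ∈ level (k - 1)
  decomp_union : ∀ k, 1 ≤ k → ∀ F ∈ level k,
    F = (Finset.range (τ.n k)).biUnion (decomp F)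
  decomp_root : ∀ k, 1 ≤ k → ∀ F ∈ level k, ∀ i < τ.n k, ∀ j < τ.n k, i ≠ j →
    decomp F i ∩ decomp F j = root F
  decomp_increasing : ∀ k, 1 ≤ k → ∀ F ∈ level k, ∀ i j, i < j → j < τ.n k →
    ∀ x ∈ decomp F i \ root F, ∀ y ∈ decomp F j \ root F, x < y
  root_lt_decomp : ∀ k, 1 ≤ k → ∀ F ∈ level k, ∀ i < τ.n k,
    ∀ x ∈ root F, ∀ y ∈ decomp F i \ root F, x < y
  decomp_unique : ∀ k, 1 ≤ k → ∀ F ∈ level k, ∀ G : ℕ → Finset Ω,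
    (∀ i < τ.n k, G i ∈ level (k - 1)) →
    F = (Finset.range (τ.n k)).biUnion G →
    (∀ i < τ.n k, ∀ j < τ.n k, i ≠ j → G i ∩ G j = root F) →
    (∀ i j, i < j → j < τ.n k →
      ∀ x ∈ G i \ root F, ∀ y ∈ G j \ root F, x < y) →
    (∀ i < τ.n k, ∀ x ∈ root F, ∀ y ∈ G i \ root F, x < y) →
    ∀ i < τ.n k, G i = decomp F i

namespace ConstructionScheme

variable {τ : SchemeType} {Ω : Type*} [LinearOrder Ω]

/-- The scheme `S` captures the finite Δ-system `t 0, …, t (n-1)` with root `ρ`: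
there are `k ≥ 1` and `F ∈ 𝓕_k` with canonical decomposition `(Fᵢ)_{i<n_k}` such that
`ρ ⊆ R(F)`, `t i \ ρ ⊆ Fᵢ \ R(F)` and `φᵢ(t 0) = t i` for all `i < n`. -/
def CapturesFamily (S : ConstructionScheme τ Ω) (n : ℕ) (t : ℕ → Finset Ω)
    (ρ : Finset Ω) : Prop :=
  ∃ k, 1 ≤ k ∧ n ≤ τ.n k ∧ ∃ F ∈ S.level k,
    ρ ⊆ S.root F ∧
    (∀ i < n, t i \ ρ ⊆ S.decomp F i \ S.root F) ∧
    (∀ i < n, (t 0).image (opMap (S.decomp F 0) (S.decomp F i)) = t i)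

/-- The scheme `S` captures the points `ξ 0 < … < ξ (n-1)`: there are `k ≥ 1` and `F ∈ 𝓕_k`
with canonical decomposition `(Fᵢ)_{i<n_k}` such that `ξ i ∈ Fᵢ \ R(F)` and
`φᵢ(ξ 0) = ξ i` for all `i < n`. -/
def CapturesPoints (S : ConstructionScheme τ Ω) (n : ℕ) (ξ : ℕ → Ω) : Prop :=
  ∃ k, 1 ≤ k ∧ n ≤ τ.n k ∧ ∃ F ∈ S.level k,
    ∀ i < n, ξ i ∈ S.decomp F i \ S.root F ∧
      opMap (S.decomp F 0) (S.decomp F i) (ξ 0) = ξ i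

end ConstructionScheme

/-- `(s_ξ)_{ξ<ω₁}` is an (uncountable, increasing) Δ-system with root `ρ`:
`s α ∩ s β = ρ` and `max (s α \ ρ) < min (s β \ ρ)` whenever `α < β`. -/
def IsDeltaSystem (s : Omega1 → Finset Omega1) (ρ : Finset Omega1) : Prop :=
  ∀ α β : Omega1, α < β → s α ∩ s β = ρ ∧ ∀ x ∈ s α \ ρ, ∀ y ∈ s β \ ρ, x < y

namespace ConstructionScheme

variable {τ : SchemeType}

/-- `S` is an `n`-capturing construction scheme: every uncountable Δ-system
`(s_ξ)_{ξ<ω₁}` with root `ρ` has `n` members `s_{ξ_0}, …, s_{ξ_{n-1}}` (with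
`ξ_0 < … < ξ_{n-1}`) captured by `S`. -/
def IsNCapturing (S : ConstructionScheme τ Omega1) (n : ℕ) : Prop :=
  ∀ (s : Omega1 → Finset Omega1) (ρ : Finset Omega1), IsDeltaSystem s ρ →
    ∃ ξ : ℕ → Omega1, (∀ i j, i < j → j < n → ξ i < ξ j) ∧
      S.CapturesFamily n (fun i => s (ξ i)) ρ

/-- `S` is capturing: `n`-capturing for every `n ≥ 2`. -/
def IsCapturing (S : ConstructionScheme τ Omega1) : Prop :=
  ∀ n, 2 ≤ n → S.IsNCapturing n

/-- The poset `ℙ_n`: finite `P ⊆ ω₁` such that no `ξ_0 < … < ξ_n` in `P` are captured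
by the scheme, ordered by reverse inclusion. -/
def PosetP (S : ConstructionScheme τ Omega1) (n : ℕ) : Set (Finset Omega1) :=
  {P | ∀ ξ : ℕ → Omega1, (∀ i ≤ n, ξ i ∈ P) → (∀ i j, i < j → j ≤ n → ξ i < ξ j) →
    ¬ S.CapturesPoints (n + 1) ξ}

end ConstructionScheme


section Aux

variable {Ω : Type*} [LinearOrder Ω]

lemma initSeg_total {A B E : Finset Ω} (hA : IsInitialSegment A E)
    (hB : IsInitialSegment B E) : A ⊆ B ∨ B ⊆ A := by
  by_cases h : A ⊆ B
  · exact Or.inl h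
  · right
    obtain ⟨a, haA, haB⟩ := Finset.not_subset.mp h
    intro b hbB
    rcases le_total b a with hba | hab
    · exact hA.2 b (hB.1 hbB) a haA hba
    · exact absurd (hB.2 a (hA.1 haA) b hbB hab) haB

lemma card_filter_lt_orderIsoOfFin (G : Finset Ω) {m : ℕ} (h : G.card = m) (i : Fin m) :
    (G.filter (fun y => y < ((G.orderIsoOfFin h) i : Ω))).card = (i : ℕ) := by
  classical
  set g := G.orderIsoOfFin h with hg
  have himg : G.filter (fun y => y < (g i : Ω)) =
      (Finset.Iio i).image (fun j => (g j : Ω)) := by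
    ext y
    simp only [Finset.mem_filter, Finset.mem_image, Finset.mem_Iio]
    constructor
    · rintro ⟨hyG, hlt⟩
      refine ⟨g.symm ⟨y, hyG⟩, ?_, by simp⟩
      have : g (g.symm ⟨y, hyG⟩) < g i := by
        rw [OrderIso.apply_symm_apply]
        exact Subtype.coe_lt_coe.mp hlt
      exact g.lt_iff_lt.mp this
    · rintro ⟨j, hj, rfl⟩
      exact ⟨(g j).2, Subtype.coe_lt_coe.mpr (g.lt_iff_lt.mpr hj)⟩
  rw [himg, Finset.card_image_of_injective _ (fun a b hab => g.injective (Subtype.ext hab)),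
    Fin.card_Iio]

lemma eq_of_card_filter_lt_eq {G : Finset Ω} {x y : Ω} (hx : x ∈ G) (hy : y ∈ G)
    (h : (G.filter (fun z => z < x)).card = (G.filter (fun z => z < y)).card) : x = y := by
  classical
  by_contra hne
  have key : ∀ a b : Ω, a ∈ G → b ∈ G → a < b →
      (G.filter (fun z => z < a)).card < (G.filter (fun z => z < b)).card := by
    intro a b haG hbG hab
    apply Finset.card_lt_card
    constructor
    · intro z hz
      rw [Finset.mem_filter] at hz ⊢
      exact ⟨hz.1, lt_trans hz.2 hab⟩
    · intro hsub
      have : a ∈ G.filter (fun z => z < a) := hsub (Finset.mem_filter.mpr ⟨haG, hab⟩)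
      exact absurd (Finset.mem_filter.mp this).2 (lt_irrefl a)
  rcases lt_or_gt_of_ne hne with hlt | hlt
  · exact absurd h (Nat.ne_of_lt (key x y hx hy hlt))
  · exact absurd h.symm (Nat.ne_of_lt (key y x hy hx hlt))

lemma opMap_eq_self {E F : Finset Ω} (hc : F.card = E.card) {x : Ω} (hxE : x ∈ E) (hxF : x ∈ F)
    (hfilt : E.filter (fun z => z < x) = F.filter (fun z => z < x)) : opMap E F x = x := by
  classical
  rw [opMap, dif_pos ⟨hxE, hc⟩]
  set e := E.orderIsoOfFin rfl with he
  set f := F.orderIsoOfFin hc with hf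
  set i := e.symm ⟨x, hxE⟩ with hi
  have h1 : (F.filter (fun z => z < (f i : Ω))).card = (i : ℕ) :=
    card_filter_lt_orderIsoOfFin F hc i
  have h2 : (E.filter (fun z => z < x)).card = (i : ℕ) := by
    have hex : (e i : Ω) = x := by rw [hi, OrderIso.apply_symm_apply]
    conv_lhs => rw [← hex]
    exact card_filter_lt_orderIsoOfFin E rfl i
  exact eq_of_card_filter_lt_eq (f i).2 hxF (by rw [h1, ← h2, hfilt])

lemma opMap_injOn {E F : Finset Ω} (hc : F.card = E.card) {x y : Ω} (hx : x ∈ E) (hy : y ∈ E)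
    (h : opMap E F x = opMap E F y) : x = y := by
  classical
  rw [opMap, dif_pos ⟨hx, hc⟩, opMap, dif_pos ⟨hy, hc⟩] at h
  have h1 := (F.orderIsoOfFin hc).injective (Subtype.ext h)
  have h2 := (E.orderIsoOfFin rfl).symm.injective h1
  exact congrArg Subtype.val h2

lemma opMap_mem {E F : Finset Ω} (hc : F.card = E.card) {x : Ω} (hx : x ∈ E) :
    opMap E F x ∈ F := by
  classical
  rw [opMap, dif_pos ⟨hx, hc⟩]
  exact ((F.orderIsoOfFin hc) _).2

namespace ConstructionScheme

variable {τ : SchemeType} (S : ConstructionScheme τ Ω)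

lemma decomp_subset {k : ℕ} (hk : 1 ≤ k) {F : Finset Ω} (hF : F ∈ S.level k) {i : ℕ}
    (hi : i < τ.n k) : S.decomp F i ⊆ F := by
  conv_rhs => rw [S.decomp_union k hk F hF]
  exact Finset.subset_biUnion_of_mem _ (Finset.mem_range.mpr hi)

lemma inter_initSeg_of_le :
    ∀ q p, p ≤ q → ∀ E ∈ S.level p, ∀ G ∈ S.level q, IsInitialSegment (E ∩ G) E := by
  intro q
  induction q with
  | zero =>
    intro p hp E hE G hG
    have : p = 0 := Nat.le_zero.mp hp
    subst this
    exact S.inter_initSeg 0 E hE G hG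
  | succ q ih =>
    intro p hp E hE G hG
    rcases Nat.lt_succ_iff_lt_or_eq.mp (Nat.lt_succ_of_le hp) with hlt | heq
    · have hq1 : 1 ≤ q + 1 := Nat.succ_le_succ (Nat.zero_le q)
      refine ⟨Finset.inter_subset_left, ?_⟩
      intro x hxE y hy hxy
      have hyG : y ∈ G := (Finset.mem_inter.mp hy).2
      have hyE : y ∈ E := (Finset.mem_inter.mp hy).1
      have hGd := S.decomp_union (q + 1) hq1 G hG
      rw [hGd, Finset.mem_biUnion] at hyG
      obtain ⟨u, hu, hyu⟩ := hyG
      have hu' : u < τ.n (q + 1) := Finset.mem_range.mp hu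
      have hlev : S.decomp G u ∈ S.level q := by
        have := S.decomp_mem (q + 1) hq1 G hG u hu'
        simpa using this
      have hseg := ih p (Nat.lt_succ_iff.mp hlt) E hE _ hlev
      have hx : x ∈ E ∩ S.decomp G u :=
        hseg.2 x hxE y (Finset.mem_inter.mpr ⟨hyE, hyu⟩) hxy
      refine Finset.mem_inter.mpr ⟨hxE, ?_⟩
      exact S.decomp_subset hq1 hG hu' (Finset.mem_inter.mp hx).2
    · subst heq
      exact S.inter_initSeg (q + 1) E hE G hG

lemma inter_subset_piece {p q : ℕ} (hpq : p < q) {E G : Finset Ω}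
    (hE : E ∈ S.level p) (hG : G ∈ S.level q) :
    ∃ t, t < τ.n q ∧ E ∩ G ⊆ S.decomp G t := by
  classical
  have hq1 : 1 ≤ q := Nat.one_le_iff_ne_zero.mpr (by omega)
  have hnq : 0 < τ.n q := by have := τ.k_lt_n q hq1; omega
  have hISeg : ∀ u, u < τ.n q → IsInitialSegment (E ∩ S.decomp G u) E := by
    intro u hu
    have hlev : S.decomp G u ∈ S.level (q - 1) := S.decomp_mem q hq1 G hG u hu
    exact S.inter_initSeg_of_le (q - 1) p (by omega) E hE _ hlev
  obtain ⟨t, ht, hmax⟩ := Finset.exists_max_image (Finset.range (τ.n q))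
    (fun u => (E ∩ S.decomp G u).card) ⟨0, Finset.mem_range.mpr hnq⟩
  have ht' : t < τ.n q := Finset.mem_range.mp ht
  refine ⟨t, ht', ?_⟩
  intro x hx
  have hxE : x ∈ E := (Finset.mem_inter.mp hx).1
  have hxG : x ∈ G := (Finset.mem_inter.mp hx).2
  have hGd := S.decomp_union q hq1 G hG
  rw [hGd, Finset.mem_biUnion] at hxG
  obtain ⟨u, hu, hxu⟩ := hxG
  have hu' : u < τ.n q := Finset.mem_range.mp hu
  have hsub : E ∩ S.decomp G u ⊆ E ∩ S.decomp G t := by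
    rcases initSeg_total (hISeg u hu') (hISeg t ht') with h | h
    · exact h
    · intro z hz
      rwa [Finset.eq_of_subset_of_card_le h (hmax u hu)]
  exact (Finset.mem_inter.mp (hsub (Finset.mem_inter.mpr ⟨hxE, hxu⟩))).2

end ConstructionScheme

end Aux

/-- If `D_0, …, D_{n-1} ∈ 𝓕_k` form an increasing Δ-system, `P_j ∈ ℙ_n`
with `P_j ⊆ D_j`, and `φ_{D_i,D_j}(P_i) = P_j` for `i < j < n`, then
`⋃_{j<n} P_j ∈ ℙ_n`. -/
theorem union_mem_posetP {τ : SchemeType} (S : ConstructionScheme τ Omega1)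
    (n : ℕ) (hn : 1 ≤ n) (k : ℕ) (D P : ℕ → Finset Omega1) (Droot : Finset Omega1)
    (hD : ∀ j < n, D j ∈ S.level k)
    (hroot : ∀ i < n, ∀ j < n, i ≠ j → D i ∩ D j = Droot)
    (hinc : ∀ i j, i < j → j < n → ∀ x ∈ D i \ Droot, ∀ y ∈ D j \ Droot, x < y)
    (hlow : ∀ j < n, ∀ x ∈ Droot, ∀ y ∈ D j \ Droot, x < y)
    (hPmem : ∀ j < n, P j ∈ S.PosetP n)
    (hPsub : ∀ j < n, P j ⊆ D j)
    (hmap : ∀ i j, i < j → j < n → (P i).image (opMap (D i) (D j)) = P j) :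
    (Finset.range n).biUnion P ∈ S.PosetP n := by
  simp only [ConstructionScheme.PosetP, Set.mem_setOf_eq]
  intro ξ hmem hinc' hcap
  obtain ⟨l, hl1, hnl, F, hF, hcapF⟩ := hcap
  -- choose blocks
  have hβex : ∀ i, i ≤ n → ∃ b, b < n ∧ ξ i ∈ P b := by
    intro i hi
    have h := hmem i hi
    rw [Finset.mem_biUnion] at h
    obtain ⟨b, hb, h⟩ := h
    exact ⟨b, Finset.mem_range.mp hb, h⟩
  choose! β hβlt hβmem using hβex
  have hmemDF : ∀ i, i ≤ n → ξ i ∈ S.decomp F i := fun i hi =>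
    (Finset.mem_sdiff.mp (hcapF i (by omega)).1).1
  have hnotR : ∀ i, i ≤ n → ξ i ∉ S.root F := fun i hi =>
    (Finset.mem_sdiff.mp (hcapF i (by omega)).1).2
  have hξFmem : ∀ i, i ≤ n → ξ i ∈ F := fun i hi =>
    S.decomp_subset hl1 hF (lt_of_lt_of_le (by omega : i < n + 1) hnl) (hmemDF i hi)
  rcases le_or_gt l k with hlk | hkl
  · -- case l ≤ k : all points lie in a single P j
    have hinitF : ∀ j, j < n → IsInitialSegment (F ∩ D j) F := fun j hj =>
      S.inter_initSeg_of_le k l hlk F hF (D j) (hD j hj)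
    have hDsub : ∀ b, b < n → ∀ c, c < n → b ≠ c → Droot ⊆ D b := by
      intro b hb c hc hbc
      rw [← hroot b hb c hc hbc]
      exact Finset.inter_subset_left
    have hfiltD : ∀ b, b < n → ∀ c, c < n → b ≠ c → ∀ x ∈ Droot,
        (D b).filter (fun z => z < x) = (D c).filter (fun z => z < x) := by
      intro b hb c hc hbc x hx
      have haux : ∀ d, d < n → Droot ⊆ D d →
          (D d).filter (fun z => z < x) = Droot.filter (fun z => z < x) := by
        intro d hd hsub
        ext y
        simp only [Finset.mem_filter]
        constructor
        · rintro ⟨hyD, hyx⟩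
          refine ⟨?_, hyx⟩
          by_contra hyr
          exact absurd hyx (not_lt.mpr (le_of_lt
            (hlow d hd x hx y (Finset.mem_sdiff.mpr ⟨hyD, hyr⟩))))
        · rintro ⟨hyr, hyx⟩
          exact ⟨hsub hyr, hyx⟩
      rw [haux b hb (hDsub b hb c hc hbc), haux c hc (hDsub c hc b hb (Ne.symm hbc))]
    have hcardDD : ∀ b, b < n → ∀ c, c < n → (D c).card = (D b).card := by
      intro b hb c hc
      rw [S.card_eq k (D b) (hD b hb), S.card_eq k (D c) (hD c hc)]
    have htrans : ∀ b, b < n → ∀ c, c < n → ∀ x, x ∈ P b → x ∈ Droot → x ∈ P c := by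
      intro b hb c hc x hxP hxr
      rcases lt_trichotomy b c with h | h | h
      · have hbc : b ≠ c := Nat.ne_of_lt h
        have hfix : opMap (D b) (D c) x = x :=
          opMap_eq_self (hcardDD b hb c hc) (hPsub b hb hxP)
            (hDsub c hc b hb (Ne.symm hbc) hxr) (hfiltD b hb c hc hbc x hxr)
        rw [← hmap b c h hc, ← hfix]
        exact Finset.mem_image_of_mem _ hxP
      · rw [← h]; exact hxP
      · have hcb : c ≠ b := Nat.ne_of_lt h
        have hxDc : x ∈ D c := hDsub c hc b hb hcb hxr
        have hfix : opMap (D c) (D b) x = x :=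
          opMap_eq_self (hcardDD c hc b hb) hxDc (hPsub b hb hxP)
            (hfiltD c hc b hb hcb x hxr)
        have himg : x ∈ (P c).image (opMap (D c) (D b)) := by
          rw [hmap c b h hb]; exact hxP
        obtain ⟨y, hyP, hyx⟩ := Finset.mem_image.mp himg
        have : y = x := opMap_injOn (hcardDD c hc b hb) (hPsub c hc hyP) hxDc
          (by rw [hyx, hfix])
        rw [← this]; exact hyP
    by_cases hall : ∀ i, i ≤ n → ξ i ∈ Droot
    · have h0 : β 0 < n := hβlt 0 (Nat.zero_le n)
      exact hPmem (β 0) h0 ξ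
        (fun i hi => htrans (β i) (hβlt i hi) (β 0) h0 (ξ i) (hβmem i hi) (hall i hi))
        hinc' ⟨l, hl1, hnl, F, hF, hcapF⟩
    · push_neg at hall
      obtain ⟨i₀, hi₀n, hi₀⟩ := hall
      have hj₀ : β i₀ < n := hβlt i₀ hi₀n
      have hsame : ∀ i, i ≤ n → ξ i ∉ Droot → β i = β i₀ := by
        intro i hi hnroot
        by_contra hne
        rcases lt_trichotomy i i₀ with h | h | h
        · have h1 : ξ i ≤ ξ i₀ := (hinc' i i₀ h hi₀n).le
          have h2 : ξ i₀ ∈ F ∩ D (β i₀) := Finset.mem_inter.mpr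
            ⟨hξFmem i₀ hi₀n, hPsub (β i₀) hj₀ (hβmem i₀ hi₀n)⟩
          have h3 : ξ i ∈ F ∩ D (β i₀) :=
            (hinitF (β i₀) hj₀).2 (ξ i) (hξFmem i hi) (ξ i₀) h2 h1
          have h4 : ξ i ∈ D (β i) ∩ D (β i₀) := Finset.mem_inter.mpr
            ⟨hPsub (β i) (hβlt i hi) (hβmem i hi), (Finset.mem_inter.mp h3).2⟩
          rw [hroot (β i) (hβlt i hi) (β i₀) hj₀ hne] at h4
          exact hnroot h4
        · exact hne (by rw [h])
        · have h1 : ξ i₀ ≤ ξ i := (hinc' i₀ i h hi).le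
          have h2 : ξ i ∈ F ∩ D (β i) := Finset.mem_inter.mpr
            ⟨hξFmem i hi, hPsub (β i) (hβlt i hi) (hβmem i hi)⟩
          have h3 : ξ i₀ ∈ F ∩ D (β i) :=
            (hinitF (β i) (hβlt i hi)).2 (ξ i₀) (hξFmem i₀ hi₀n) (ξ i) h2 h1
          have h4 : ξ i₀ ∈ D (β i) ∩ D (β i₀) := Finset.mem_inter.mpr
            ⟨(Finset.mem_inter.mp h3).2, hPsub (β i₀) hj₀ (hβmem i₀ hi₀n)⟩
          rw [hroot (β i) (hβlt i hi) (β i₀) hj₀ hne] at h4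
          exact hi₀ h4
      have hmem' : ∀ i, i ≤ n → ξ i ∈ P (β i₀) := by
        intro i hi
        by_cases hr : ξ i ∈ Droot
        · exact htrans (β i) (hβlt i hi) (β i₀) hj₀ (ξ i) (hβmem i hi) hr
        · rw [← hsame i hi hr]; exact hβmem i hi
      exact hPmem (β i₀) hj₀ ξ hmem' hinc' ⟨l, hl1, hnl, F, hF, hcapF⟩
  · -- case k < l : each D j ∩ F lies in a single piece of F, pigeonhole
    have hpiece : ∀ j, j < n → ∃ t, t < τ.n l ∧ D j ∩ F ⊆ S.decomp F t := fun j hj =>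
      S.inter_subset_piece hkl (hD j hj) hF
    choose! t ht hsub using hpiece
    have hti : ∀ i, i ≤ n → t (β i) = i := by
      intro i hi
      by_contra hne
      have h1 : ξ i ∈ D (β i) ∩ F := Finset.mem_inter.mpr
        ⟨hPsub (β i) (hβlt i hi) (hβmem i hi), hξFmem i hi⟩
      have h2 : ξ i ∈ S.decomp F (t (β i)) := hsub (β i) (hβlt i hi) h1
      have h3 : ξ i ∈ S.decomp F (t (β i)) ∩ S.decomp F i :=
        Finset.mem_inter.mpr ⟨h2, hmemDF i hi⟩
      have h4 := S.decomp_root l hl1 F hF (t (β i)) (ht (β i) (hβlt i hi)) i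
        (lt_of_lt_of_le (by omega : i < n + 1) hnl) hne
      exact hnotR i hi (by rw [← h4]; exact Finset.mem_inter.mpr ⟨h2, hmemDF i hi⟩)
    have hmaps : ∀ i ∈ Finset.range (n + 1), β i ∈ Finset.range n := fun i hi =>
      Finset.mem_range.mpr (hβlt i (Nat.lt_succ_iff.mp (Finset.mem_range.mp hi)))
    obtain ⟨i, hi, i', hi', hne, heq⟩ :=
      Finset.exists_ne_map_eq_of_card_lt_of_maps_to (by simp) hmaps
    apply hne
    have h1 := hti i (Nat.lt_succ_iff.mp (Finset.mem_range.mp hi))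
    have h2 := hti i' (Nat.lt_succ_iff.mp (Finset.mem_range.mp hi'))
    rw [← h1, heq, h2]
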